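/- arXiv:1502.02467 — 2 statements merged into one kernel-verified Lean document; each statement's English description precedes it below -/
import Mathlib

section
/- Let P = ⟨V, C⟩ be a CSP instance such that every constraint c ∈ C with iv(c) = ∅ has nonempty relation R(c). Let P_CL = ⟨V, {ic(c) : c ∈ C}⟩ be the instance whose constraints are the induced table constraints. Then the scope of ic(c) equals S(c) for every c ∈ C (so P and P_CL have the same hypergraph), and P_CL has a solution if and only if P has a solution. Moreover, every solution θ of P yields the solution of P_CL that agrees with θ on ⋃_{c ∈ C} iv(c) and assigns * to every other variable, and every solution of P_CL agrees on ⋃_{c ∈ C} iv(c) with some solution of P. -/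
/-! Basic framework for CSP instances with possibly implicitly represented
(global) constraints, following the paper's definitions. -/

variable {ι : Type*} {α : Type*}

/-- The restriction `θ|_X` of an assignment `θ` of the variables `W`
to a subset `X ⊆ W`. -/
def restrictA {W X : Set ι} (h : X ⊆ W) (θ : W → α) : X → α :=
  fun x => θ ⟨x.1, h x.2⟩

/-- A constraint is given by its scope together with its relation, a set of
assignments of the scope (the satisfying assignments). -/
structure Constraint (ι : Type*) (α : Type*) where
  scope : Set ι
  rel : Set (scope → α)

/-- A CSP instance: a finite set of variables, a finite nonempty domain for each
variable, and a finite set of constraints whose scopes are sets of variables of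
the instance, such that every variable occurs in the scope of some constraint
and all relations consist of domain-respecting assignments. -/
structure CSP (ι : Type*) (α : Type*) where
  vars : Set ι
  dom : ι → Set α
  cons : Set (Constraint ι α)
  vars_finite : vars.Finite
  cons_finite : cons.Finite
  dom_finite : ∀ v ∈ vars, (dom v).Finite
  dom_nonempty : ∀ v ∈ vars, (dom v).Nonempty
  scope_sub : ∀ c ∈ cons, c.scope ⊆ vars
  cover : ∀ v ∈ vars, ∃ c ∈ cons, v ∈ c.scope
  rel_dom : ∀ c ∈ cons, ∀ θ ∈ c.rel, ∀ v, θ v ∈ dom v.1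

namespace CSP

/-- `θ` is an assignment (it respects the domains). -/
def IsAssignment (P : CSP ι α) {W : Set ι} (θ : W → α) : Prop :=
  ∀ v, θ v ∈ P.dom v.1

/-- `θ` satisfies every constraint of `P`. -/
def Satisfies (P : CSP ι α) (θ : P.vars → α) : Prop :=
  ∀ c (hc : c ∈ P.cons), restrictA (P.scope_sub c hc) θ ∈ c.rel

/-- The set of solutions of `P`. -/
def sol (P : CSP ι α) : Set (P.vars → α) :=
  { θ | P.IsAssignment θ ∧ P.Satisfies θ }

end CSP

/-- The projection of a constraint onto a set of variables `X`
(scope `S(c) ∩ X`, relation the restrictions of satisfying assignments). -/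
def Constraint.proj (c : Constraint ι α) (X : Set ι) : Constraint ι α where
  scope := c.scope ∩ X
  rel := { μ | ∃ θ ∈ c.rel, restrictA Set.inter_subset_left θ = μ }

/-- The projected instance `pj_X(P)`. -/
def CSP.proj (P : CSP ι α) (X : Set ι) (hX : X ⊆ P.vars) : CSP ι α where
  vars := X
  dom := P.dom
  cons := (fun c => c.proj X) '' { c ∈ P.cons | (c.scope ∩ X).Nonempty }
  vars_finite := P.vars_finite.subset hX
  cons_finite := (P.cons_finite.subset (Set.sep_subset _ _)).image _
  dom_finite := fun v hv => P.dom_finite v (hX hv)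
  dom_nonempty := fun v hv => P.dom_nonempty v (hX hv)
  scope_sub := by
    rintro c' ⟨c, ⟨hc, hne⟩, rfl⟩
    exact Set.inter_subset_right
  cover := by
    intro v hv
    obtain ⟨c, hc, hvc⟩ := P.cover v (hX hv)
    exact ⟨c.proj X, ⟨c, ⟨hc, ⟨v, hvc, hv⟩⟩, rfl⟩, ⟨hvc, hv⟩⟩
  rel_dom := by
    rintro c' ⟨c, ⟨hc, hne⟩, rfl⟩ μ ⟨θ, hθ, rfl⟩ v
    exact P.rel_dom c hc θ hθ ⟨v.1, v.2.1⟩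

/-- The set of intersection variables of a constraint `c` in the instance `P`:
the variables of `c` shared with some other constraint of `P`. -/
def CSP.iv (P : CSP ι α) (c : Constraint ι α) : Set ι :=
  ⋃ c' ∈ P.cons \ {c}, c.scope ∩ c'.scope

lemma CSP.iv_subset_scope (P : CSP ι α) (c : Constraint ι α) :
    P.iv c ⊆ c.scope :=
  Set.iUnion₂_subset fun _ _ => Set.inter_subset_left

lemma CSP.iv_subset_vars (P : CSP ι α) (c : Constraint ι α) :
    P.iv c ⊆ P.vars :=
  Set.iUnion₂_subset fun c' hc' => Set.inter_subset_right.trans (P.scope_sub c' hc'.1)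

open Classical in
/-- The table constraint induced by the constraint `c` in the instance `P`:
its scope is `S(c)` and its relation consists of the assignments
`θ ⊕ μ*_c` for `θ ∈ sol(pj_{iv(c)}(P))`, where `μ*_c` assigns the special
value `star` to every variable of `S(c) ∖ iv(c)`. -/
def CSP.ic (P : CSP ι α) (star : α) (c : Constraint ι α) : Constraint ι α where
  scope := c.scope
  rel := { μ | ∃ θ ∈ (P.proj (P.iv c) (P.iv_subset_vars c)).sol,
      μ = fun v => if h : v.1 ∈ P.iv c then θ ⟨v.1, h⟩ else star }

open Classical in
/-- The classic instance `P_CL` induced by `P`: same variables, domains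
extended by the special value `star`, and constraints the induced table
constraints `ic(c)` for `c ∈ C`. -/
def CSP.toClassic (P : CSP ι α) (star : α) : CSP ι α where
  vars := P.vars
  dom := fun v => insert star (P.dom v)
  cons := (P.ic star) '' P.cons
  vars_finite := P.vars_finite
  cons_finite := P.cons_finite.image _
  dom_finite := fun v hv => (P.dom_finite v hv).insert star
  dom_nonempty := fun v _ => ⟨star, Set.mem_insert _ _⟩
  scope_sub := by
    rintro c' ⟨c, hc, rfl⟩
    exact P.scope_sub c hc
  cover := by
    intro v hv
    obtain ⟨c, hc, hvc⟩ := P.cover v hv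
    exact ⟨P.ic star c, ⟨c, hc, rfl⟩, hvc⟩
  rel_dom := by
    rintro c' ⟨c, hc, rfl⟩ μ ⟨θ, hθ, rfl⟩ v
    dsimp only
    split
    · next h => exact Set.mem_insert_iff.mpr (Or.inr (hθ.1 ⟨v.1, h⟩))
    · exact Set.mem_insert _ _

lemma mem_iv_of {P : CSP ι α} {c c' : Constraint ι α} (hc' : c' ∈ P.cons)
    (hcc : c' ≠ c) {v : ι} (hv : v ∈ c.scope) (hv' : v ∈ c'.scope) :
    v ∈ P.iv c :=
  Set.mem_biUnion (show c' ∈ P.cons \ {c} from ⟨hc', hcc⟩) ⟨hv, hv'⟩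

lemma mem_iv_mono {P : CSP ι α} {c c' : Constraint ι α} (hc : c ∈ P.cons)
    {v : ι} (hv : v ∈ P.iv c) (hv' : v ∈ c'.scope) : v ∈ P.iv c' := by
  by_cases h : c = c'
  · exact h ▸ hv
  · exact mem_iv_of hc h hv' (P.iv_subset_scope c hv)

lemma sol_restrict_iv {P : CSP ι α} {c : Constraint ι α}
    {θ : P.vars → α} (hθ : θ ∈ P.sol) :
    restrictA (P.iv_subset_vars c) θ ∈ (P.proj (P.iv c) (P.iv_subset_vars c)).sol := by
  constructor
  · intro v
    show θ ⟨v.1, P.iv_subset_vars c v.2⟩ ∈ P.dom v.1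
    exact hθ.1 ⟨v.1, P.iv_subset_vars c v.2⟩
  · rintro c' ⟨c'', ⟨hc'', hn⟩, rfl⟩
    exact ⟨restrictA (P.scope_sub c'' hc'') θ, hθ.2 c'' hc'', rfl⟩

open Classical in
/-- Let `P = ⟨V, C⟩` be a CSP instance such that every
constraint `c ∈ C` with `iv(c) = ∅` has nonempty relation, and let
`P_CL = ⟨V, {ic(c) : c ∈ C}⟩`.  Then the scope of `ic(c)` equals `S(c)` for
every `c ∈ C` (so `P` and `P_CL` have the same hypergraph), and `P_CL` has a
solution iff `P` has one.  Moreover, every solution `θ` of `P` yields the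
solution of `P_CL` that agrees with `θ` on `⋃_{c ∈ C} iv(c)` and assigns
`star` to every other variable, and every solution of `P_CL` agrees on
`⋃_{c ∈ C} iv(c)` with some solution of `P`. -/
theorem toClassic_spec (P : CSP ι α) (star : α)
    (hstar : ∀ v, star ∉ P.dom v)
    (hne : ∀ c ∈ P.cons, P.iv c = ∅ → c.rel.Nonempty) :
    (∀ c ∈ P.cons, (P.ic star c).scope = c.scope) ∧
    ((P.toClassic star).sol.Nonempty ↔ P.sol.Nonempty) ∧
    (∀ θ ∈ P.sol,
      (fun v : P.vars => if v.1 ∈ ⋃ c ∈ P.cons, P.iv c then θ v else star) ∈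
        (P.toClassic star).sol) ∧
    (∀ θ ∈ (P.toClassic star).sol, ∃ μ ∈ P.sol,
      ∀ v : P.vars, v.1 ∈ (⋃ c ∈ P.cons, P.iv c) → μ v = θ v) := by
  have h3 : ∀ θ ∈ P.sol,
      (fun v : P.vars => if v.1 ∈ ⋃ c ∈ P.cons, P.iv c then θ v else star) ∈
        (P.toClassic star).sol := by
    intro θ hθ
    constructor
    · intro v
      show _ ∈ insert star (P.dom v.1)
      dsimp only
      split
      · exact Set.mem_insert_iff.mpr (Or.inr (hθ.1 v))
      · exact Set.mem_insert _ _
    · rintro c' ⟨c, hc, rfl⟩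
      refine ⟨restrictA (P.iv_subset_vars c) θ, sol_restrict_iv hθ, ?_⟩
      funext v
      show (if v.1 ∈ ⋃ c ∈ P.cons, P.iv c then θ ⟨v.1, _⟩ else star) = _
      by_cases h : v.1 ∈ P.iv c
      · rw [if_pos (Set.mem_biUnion hc h), dif_pos h]; rfl
      · rw [dif_neg h, if_neg]
        intro hU
        rcases Set.mem_iUnion₂.mp hU with ⟨c0, hc0, hvc0⟩
        exact h (mem_iv_mono hc0 hvc0 v.2)
  have h4 : ∀ θ ∈ (P.toClassic star).sol, ∃ μ ∈ P.sol,
      ∀ v : P.vars, v.1 ∈ (⋃ c ∈ P.cons, P.iv c) → μ v = θ v := by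
    intro θ hθ
    have key : ∀ c (hc : c ∈ P.cons), ∃ η ∈ c.rel,
        ∀ (v : ι) (hv : v ∈ c.scope), v ∈ P.iv c →
          η ⟨v, hv⟩ = θ ⟨v, P.scope_sub c hc hv⟩ := by
      intro c hc
      rcases hθ.2 (P.ic star c) ⟨c, hc, rfl⟩ with ⟨θc, hθc, heq⟩
      by_cases hiv : (P.iv c).Nonempty
      · have hsub : c.scope ∩ P.iv c = P.iv c :=
          Set.inter_eq_self_of_subset_right (P.iv_subset_scope c)
        have hmem : c.proj (P.iv c) ∈ (P.proj (P.iv c) (P.iv_subset_vars c)).cons :=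
          ⟨c, ⟨hc, by rwa [hsub]⟩, rfl⟩
        rcases hθc.2 _ hmem with ⟨η, hη, heq2⟩
        refine ⟨η, hη, fun v hv hviv => ?_⟩
        have e1 : η ⟨v, hv⟩ = θc ⟨v, hviv⟩ := congrFun heq2 ⟨v, ⟨hv, hviv⟩⟩
        have e2 := congrFun heq ⟨v, hv⟩
        rw [e1]
        rw [show (restrictA ((P.toClassic star).scope_sub (P.ic star c) ⟨c, hc, rfl⟩) θ)
            ⟨v, hv⟩ = θ ⟨v, P.scope_sub c hc hv⟩ from rfl] at e2
        rw [e2, dif_pos hviv]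
      · rw [Set.not_nonempty_iff_eq_empty] at hiv
        rcases hne c hc hiv with ⟨η, hη⟩
        exact ⟨η, hη, fun v hv hviv => absurd (hiv ▸ hviv) (Set.notMem_empty v)⟩
    choose η hη1 hη2 using key
    choose cv hcv1 hcv2 using fun v : P.vars => P.cover v.1 v.2
    refine ⟨fun v => η (cv v) (hcv1 v) ⟨v.1, hcv2 v⟩, ⟨?_, ?_⟩, ?_⟩
    · intro v
      show η (cv v) (hcv1 v) ⟨v.1, hcv2 v⟩ ∈ P.dom v.1
      exact P.rel_dom (cv v) (hcv1 v) (η (cv v) (hcv1 v)) (hη1 _ _) ⟨v.1, hcv2 v⟩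
    · intro c hc
      have haux : ∀ (c c' : Constraint ι α) (h : c ∈ P.cons) (h' : c' ∈ P.cons)
          (e : c' = c) (x : ↥c.scope) (x' : ↥c'.scope), x'.1 = x.1 →
          η c' h' x' = η c h x := by
        rintro c c' h h' rfl x x' hx
        cases Subtype.ext hx
        rfl
      have he : restrictA (P.scope_sub c hc)
          (fun v => η (cv v) (hcv1 v) ⟨v.1, hcv2 v⟩) = η c hc := by
        funext v
        show η (cv ⟨v.1, P.scope_sub c hc v.2⟩) (hcv1 _) ⟨v.1, hcv2 _⟩ = η c hc v
        by_cases hcc : cv ⟨v.1, P.scope_sub c hc v.2⟩ = c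
        · exact haux c _ hc (hcv1 _) hcc v _ rfl
        · have h1 : v.1 ∈ P.iv c := mem_iv_of (hcv1 _) hcc v.2 (hcv2 _)
          have h2 : v.1 ∈ P.iv (cv ⟨v.1, P.scope_sub c hc v.2⟩) :=
            mem_iv_of hc (Ne.symm hcc) (hcv2 _) v.2
          rw [hη2 _ (hcv1 _) v.1 (hcv2 _) h2, hη2 c hc v.1 v.2 h1]
      rw [he]; exact hη1 c hc
    · intro v hv
      rcases Set.mem_iUnion₂.mp hv with ⟨c0, hc0, hvc0⟩
      have h2 : v.1 ∈ P.iv (cv v) := mem_iv_mono hc0 hvc0 (hcv2 v)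
      show η (cv v) (hcv1 v) ⟨v.1, hcv2 v⟩ = θ v
      rw [hη2 (cv v) (hcv1 v) v.1 (hcv2 v) h2]
      rfl
  refine ⟨fun c hc => rfl, ⟨?_, ?_⟩, h3, h4⟩
  · rintro ⟨θ, hθ⟩
    rcases h4 θ hθ with ⟨μ, hμ, -⟩
    exact ⟨μ, hμ⟩
  · rintro ⟨θ, hθ⟩
    exact ⟨_, h3 θ hθ⟩
end

section
/- Let P = ⟨V, C⟩ be a CSP instance in which every relation R(c) is finite, and let γ : C → [0,1] be a fractional edge cover of the hypergraph of P, i.e. ∑_{c ∈ C, v ∈ S(c)} γ(c) ≥ 1 for every v ∈ V. Then the number of solutions of P satisfies |sol(P)| ≤ ∏_{c ∈ C} |R(c)|^{γ(c)}. In particular, a classic CSP instance P has at most |P|^{ρ*(hyp(P))} solutions, where ρ*(hyp(P)) is the fractional edge cover number of its hypergraph. -/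
/-! Basic framework for CSP instances with possibly implicitly represented
(global) constraints, following the paper's definitions. -/

variable {ι : Type*} {α : Type*}

section Aux
open MeasureTheory ENNReal Finset
variable {δ β : Type*} [Fintype δ] [DecidableEq δ]



lemma holder_one {A κ : Type*} (s : Finset A) (C : Finset κ) (p : κ → ℝ)
    (hp1 : ∑ c ∈ C, p c = 1) (hp0 : ∀ c ∈ C, 0 ≤ p c) (f : κ → A → ℝ≥0∞) :
    ∑ a ∈ s, ∏ c ∈ C, f c a ^ p c ≤ ∏ c ∈ C, (∑ a ∈ s, f c a) ^ p c := by
  letI : MeasurableSpace A := ⊤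
  have hmeas : ∀ g : A → ℝ≥0∞, Measurable g := fun g t _ => trivial
  set μ : Measure A := ∑ a ∈ s, Measure.dirac a with hμ
  have hint : ∀ g : A → ℝ≥0∞, ∫⁻ a, g a ∂μ = ∑ a ∈ s, g a := by
    intro g
    rw [hμ, lintegral_finset_sum_measure]
    exact Finset.sum_congr rfl fun a _ => lintegral_dirac a g
  calc ∑ a ∈ s, ∏ c ∈ C, f c a ^ p c = ∫⁻ a, ∏ c ∈ C, f c a ^ p c ∂μ := (hint _).symm
    _ ≤ ∏ c ∈ C, (∫⁻ a, f c a ∂μ) ^ p c :=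
        ENNReal.lintegral_prod_norm_pow_le C (fun c _ => (hmeas _).aemeasurable) hp1 hp0
    _ = ∏ c ∈ C, (∑ a ∈ s, f c a) ^ p c := by
        exact Finset.prod_congr rfl fun c _ => by rw [hint]

lemma sum_rpow_le_rpow_sum' {A : Type*} (s : Finset A) {t : ℝ} (ht : 1 ≤ t) (h : A → ℝ≥0∞) :
    ∑ a ∈ s, h a ^ t ≤ (∑ a ∈ s, h a) ^ t := by
  classical
  induction s using Finset.induction with
  | empty => simp
  | insert _ _ hnot ih =>
    rw [Finset.sum_insert hnot, Finset.sum_insert hnot]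
    exact le_trans (add_le_add_right ih _) (ENNReal.add_rpow_le_rpow_add _ _ ht)

lemma holder_ge_one {A κ : Type*} (s : Finset A) (C : Finset κ) (q : κ → ℝ)
    (hq1 : 1 ≤ ∑ c ∈ C, q c) (hq0 : ∀ c ∈ C, 0 ≤ q c) (f : κ → A → ℝ≥0∞) :
    ∑ a ∈ s, ∏ c ∈ C, f c a ^ q c ≤ ∏ c ∈ C, (∑ a ∈ s, f c a) ^ q c := by
  set t : ℝ := ∑ c ∈ C, q c with hts
  have ht0 : (0:ℝ) < t := lt_of_lt_of_le one_pos hq1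
  have key := holder_one s C (fun c => q c / t)
    (by rw [← Finset.sum_div, ← hts, div_self ht0.ne']) (fun c hc => div_nonneg (hq0 c hc) ht0.le)
    (fun c a => f c a ^ t)
  have hl : ∀ (c : κ) (x : ℝ≥0∞), (x ^ t) ^ (q c / t) = x ^ q c := fun c x => by
    rw [← ENNReal.rpow_mul, mul_div_assoc', mul_comm, mul_div_assoc, div_self ht0.ne', mul_one]
  calc ∑ a ∈ s, ∏ c ∈ C, f c a ^ q c
      = ∑ a ∈ s, ∏ c ∈ C, (f c a ^ t) ^ (q c / t) := by
        refine Finset.sum_congr rfl fun a _ => Finset.prod_congr rfl fun c _ => (hl c _).symm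
    _ ≤ ∏ c ∈ C, (∑ a ∈ s, f c a ^ t) ^ (q c / t) := key
    _ ≤ ∏ c ∈ C, ((∑ a ∈ s, f c a) ^ t) ^ (q c / t) := by
        refine Finset.prod_le_prod' fun c hc => ?_
        exact ENNReal.rpow_le_rpow (sum_rpow_le_rpow_sum' s hq1 (f c)) (div_nonneg (hq0 c hc) ht0.le)
    _ = ∏ c ∈ C, (∑ a ∈ s, f c a) ^ q c := Finset.prod_congr rfl fun c _ => hl c _



/-- Sum of `g` over all assignments that take values in `D v` for `v ∈ W`
and equal `θ v` elsewhere. -/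
noncomputable def marg (D : δ → Finset β) (W : Finset δ) (g : (δ → β) → ℝ≥0∞)
    (θ : δ → β) : ℝ≥0∞ :=
  ∑ p ∈ Fintype.piFinset (fun v => if v ∈ W then D v else {θ v}), g p

lemma marg_empty (D : δ → Finset β) (g : (δ → β) → ℝ≥0∞) (θ : δ → β) :
    marg D ∅ g θ = g θ := by
  have : Fintype.piFinset (fun v => if v ∈ (∅ : Finset δ) then D v else {θ v}) = {θ} := by
    ext p
    simp [Fintype.mem_piFinset, funext_iff]
  rw [marg, this, Finset.sum_singleton]

lemma marg_mono (D : δ → Finset β) (W : Finset δ) {g h : (δ → β) → ℝ≥0∞}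
    (hgh : ∀ p, g p ≤ h p) (θ : δ → β) : marg D W g θ ≤ marg D W h θ :=
  Finset.sum_le_sum fun p _ => hgh p

lemma marg_insert (D : δ → Finset β) {W : Finset δ} {v : δ} (hv : v ∉ W)
    (g : (δ → β) → ℝ≥0∞) (θ : δ → β) :
    marg D (insert v W) g θ = ∑ a ∈ D v, marg D W g (Function.update θ v a) := by
  classical
  rw [marg, eq_comm]
  simp only [marg]
  rw [Finset.sum_sigma']
  refine Finset.sum_nbij' (fun x => x.2) (fun p => ⟨p v, p⟩) ?_ ?_ ?_ ?_ ?_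
  · rintro ⟨a, p⟩ hx
    rw [Finset.mem_sigma] at hx
    obtain ⟨ha, hp⟩ := hx
    rw [Fintype.mem_piFinset] at hp ⊢
    intro u
    by_cases hu : u ∈ W
    · have := hp u
      simp only [hu, if_true] at this
      simp [Finset.mem_insert, hu, this]
    · have := hp u
      simp only [hu, if_false, Finset.mem_singleton] at this
      by_cases huv : u = v
      · subst huv
        rw [Function.update_self] at this
        simp [this, ha]
      · rw [Function.update_of_ne huv] at this
        simp [Finset.mem_insert, huv, hu, this]
  · intro p hp
    rw [Fintype.mem_piFinset] at hp
    rw [Finset.mem_sigma]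
    constructor
    · have := hp v
      simpa using this
    · rw [Fintype.mem_piFinset]
      intro u
      by_cases hu : u ∈ W
      · have := hp u
        simp only [Finset.mem_insert, hu, if_true, or_true] at this ⊢
        simpa [hu] using this
      · by_cases huv : u = v
        · subst huv
          simp [hu, Function.update_self]
        · have := hp u
          simp only [Finset.mem_insert, huv, hu, if_false, false_or] at this
          simp [hu, Function.update_of_ne huv, this]
  · rintro ⟨a, p⟩ hx
    rw [Finset.mem_sigma] at hx
    obtain ⟨ha, hp⟩ := hx
    rw [Fintype.mem_piFinset] at hp
    have := hp v
    simp only [hv, if_false, Finset.mem_singleton, Function.update_self] at this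
    exact Sigma.ext this HEq.rfl
  · intro p hp
    rfl
  · rintro ⟨a, p⟩ hx
    rfl

lemma marg_update_of_indep (D : δ → Finset β) {W : Finset δ} {v : δ} (hv : v ∉ W)
    {g : (δ → β) → ℝ≥0∞} (hg : ∀ θ a, g (Function.update θ v a) = g θ)
    (θ : δ → β) (a : β) : marg D W g (Function.update θ v a) = marg D W g θ := by
  classical
  simp only [marg]
  refine Finset.sum_nbij' (fun p => Function.update p v (θ v))
    (fun p => Function.update p v a) ?_ ?_ ?_ ?_ ?_
  · intro p hp
    rw [Fintype.mem_piFinset] at hp ⊢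
    intro u
    have := hp u
    by_cases huv : u = v
    · subst huv
      simp [hv, Function.update_self]
    · simp only [Function.update_apply, huv, if_false] at this ⊢
      by_cases hu : u ∈ W <;> simpa [hu] using this
  · intro p hp
    rw [Fintype.mem_piFinset] at hp ⊢
    intro u
    have := hp u
    by_cases huv : u = v
    · subst huv
      simp [hv, Function.update_self]
    · simp only [Function.update_apply, huv, if_false] at this ⊢
      by_cases hu : u ∈ W <;> simpa [hu] using this
  · intro p hp
    rw [Fintype.mem_piFinset] at hp
    have := hp v
    simp only [hv, if_false, Finset.mem_singleton, Function.update_self] at this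
    funext u
    by_cases huv : u = v
    · subst huv; simp [Function.update_self, this]
    · simp [Function.update_of_ne huv]
  · intro p hp
    rw [Fintype.mem_piFinset] at hp
    have := hp v
    simp only [hv, if_false, Finset.mem_singleton, Function.update_self] at this
    funext u
    by_cases huv : u = v
    · subst huv; simp [Function.update_self, this]
    · simp [Function.update_of_ne huv]
  · intro p hp
    exact (hg p (θ v)).symm

set_option maxHeartbeats 1000000 in
theorem finner {κ : Type*} (D : δ → Finset β) (C : Finset κ) (S : κ → Finset δ) (γ : κ → ℝ)
    (hγ0 : ∀ c ∈ C, 0 ≤ γ c) (f : κ → (δ → β) → ℝ≥0∞)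
    (hdep : ∀ c ∈ C, ∀ (θ : δ → β) (v : δ), v ∉ S c → ∀ a, f c (Function.update θ v a) = f c θ)
    (W : Finset δ) :
    (∀ v ∈ W, 1 ≤ ∑ c ∈ C, if v ∈ S c then γ c else 0) → ∀ θ : δ → β,
      marg D W (fun τ => ∏ c ∈ C, f c τ ^ γ c) θ
        ≤ ∏ c ∈ C, (marg D (W ∩ S c) (f c) θ) ^ γ c := by
  classical
  induction W using Finset.induction with
  | empty =>
    intro _ θ
    rw [marg_empty]
    refine le_of_eq (Finset.prod_congr rfl fun c _ => ?_)
    rw [Finset.empty_inter, marg_empty]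
  | @insert v W' hv ih =>
    intro hcov θ
    have hcov' : ∀ u ∈ W', 1 ≤ ∑ c ∈ C, if u ∈ S c then γ c else 0 :=
      fun u hu => hcov u (Finset.mem_insert_of_mem hu)
    set M : κ → (δ → β) → ℝ≥0∞ := fun c θ' => marg D (W' ∩ S c) (f c) θ' with hM
    rw [marg_insert D hv]
    calc ∑ a ∈ D v, marg D W' (fun τ => ∏ c ∈ C, f c τ ^ γ c) (Function.update θ v a)
        ≤ ∑ a ∈ D v, ∏ c ∈ C, M c (Function.update θ v a) ^ γ c :=
          Finset.sum_le_sum fun a _ => ih hcov' _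
      _ = ∑ a ∈ D v, (∏ c ∈ C with v ∈ S c, M c (Function.update θ v a) ^ γ c) *
            ∏ c ∈ C with ¬ v ∈ S c, M c θ ^ γ c := by
          refine Finset.sum_congr rfl fun a _ => ?_
          rw [← Finset.prod_filter_mul_prod_filter_not C (fun c => v ∈ S c)]
          refine congrArg₂ (· * ·) rfl ?_
          refine Finset.prod_congr rfl fun c hc => ?_
          rw [Finset.mem_filter] at hc
          refine congrArg (· ^ γ c) ?_
          exact marg_update_of_indep D (fun h => hc.2 (Finset.mem_of_mem_inter_right h))
            (fun θ'' a' => hdep c hc.1 θ'' v hc.2 a') θ a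
      _ = (∑ a ∈ D v, ∏ c ∈ C with v ∈ S c, M c (Function.update θ v a) ^ γ c) *
            ∏ c ∈ C with ¬ v ∈ S c, M c θ ^ γ c := by
          rw [Finset.sum_mul]
      _ ≤ (∏ c ∈ C with v ∈ S c, (∑ a ∈ D v, M c (Function.update θ v a)) ^ γ c) *
            ∏ c ∈ C with ¬ v ∈ S c, M c θ ^ γ c := by
          refine mul_le_mul_left ?_ _
          refine holder_ge_one (D v) _ γ ?_ (fun c hc => hγ0 c (Finset.mem_of_mem_filter c hc))
            (fun c a => M c (Function.update θ v a))
          calc (1:ℝ) ≤ ∑ c ∈ C, if v ∈ S c then γ c else 0 := hcov v (Finset.mem_insert_self v W')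
            _ = ∑ c ∈ C with v ∈ S c, γ c := Finset.sum_filter _ _ |>.symm
      _ = ∏ c ∈ C, (marg D ((insert v W') ∩ S c) (f c) θ) ^ γ c := by
          rw [← Finset.prod_filter_mul_prod_filter_not C (fun c => v ∈ S c)]
          refine congrArg₂ (· * ·) ?_ ?_
          · refine Finset.prod_congr rfl fun c hc => ?_
            rw [Finset.mem_filter] at hc
            rw [Finset.insert_inter_of_mem hc.2]
            refine congrArg (· ^ γ c) ?_
            exact (marg_insert D (fun h => hv (Finset.mem_of_mem_inter_left h)) (f c) θ).symm
          · refine Finset.prod_congr rfl fun c hc => ?_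
            rw [Finset.mem_filter] at hc
            rw [Finset.insert_inter_of_notMem hc.2]

end Aux

open Classical in
/-- AGM bound / Grohe–Marx.  Let `P = ⟨V, C⟩` be a CSP
instance in which every relation `R(c)` is finite, and let `γ : C → [0,1]` be
a fractional edge cover of the hypergraph of `P`, i.e.
`∑_{c ∈ C, v ∈ S(c)} γ(c) ≥ 1` for every `v ∈ V`.  Then
`|sol(P)| ≤ ∏_{c ∈ C} |R(c)|^(γ c)` (real exponentiation). -/
theorem card_sol_le_prod_rpow (P : CSP ι α)
    (hrel : ∀ c ∈ P.cons, c.rel.Finite)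
    (γ : Constraint ι α → ℝ)
    (hγ0 : ∀ c ∈ P.cons, 0 ≤ γ c) (hγ1 : ∀ c ∈ P.cons, γ c ≤ 1)
    (hcover : ∀ v ∈ P.vars,
      1 ≤ ∑ c ∈ P.cons_finite.toFinset, if v ∈ c.scope then γ c else 0) :
    P.sol.Finite ∧
      (P.sol.ncard : ℝ) ≤
        ∏ c ∈ P.cons_finite.toFinset, (c.rel.ncard : ℝ) ^ (γ c) := by
  classical
  letI : Fintype ↥P.vars := P.vars_finite.fintype
  have hfin : P.sol.Finite := by
    have hsub : P.sol ⊆ Set.pi Set.univ (fun v : ↥P.vars => P.dom v.1) := by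
      intro θ hθ v _
      exact hθ.1 v
    exact (Set.Finite.pi fun v => P.dom_finite v.1 v.2).subset hsub
  refine ⟨hfin, ?_⟩
  set C : Finset (Constraint ι α) := P.cons_finite.toFinset with hCdef
  have hCmem : ∀ c, c ∈ C ↔ c ∈ P.cons := fun c => P.cons_finite.mem_toFinset
  set D : ↥P.vars → Finset α := fun v => (P.dom_finite v.1 v.2).toFinset with hDdef
  set S : Constraint ι α → Finset ↥P.vars :=
    fun c => Finset.univ.filter (fun v => v.1 ∈ c.scope) with hSdef
  have hSmem : ∀ c (v : ↥P.vars), v ∈ S c ↔ v.1 ∈ c.scope := by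
    intro c v; simp [hSdef]
  set f : Constraint ι α → (↥P.vars → α) → ENNReal := fun c θ =>
    if h : c ∈ P.cons then (if restrictA (P.scope_sub c h) θ ∈ c.rel then 1 else 0) else 0
    with hfdef
  have hf_eq : ∀ {c : Constraint ι α} (hcP : c ∈ P.cons) (θ : ↥P.vars → α),
      f c θ = if restrictA (P.scope_sub c hcP) θ ∈ c.rel then 1 else 0 := by
    intro c hcP θ
    simp only [hfdef]
    rw [dif_pos hcP]
  have hγ0' : ∀ c ∈ C, 0 ≤ γ c := fun c hc => hγ0 c ((hCmem c).1 hc)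
  have hdep : ∀ c ∈ C, ∀ (θ : ↥P.vars → α) (v : ↥P.vars), v ∉ S c → ∀ a,
      f c (Function.update θ v a) = f c θ := by
    intro c hc θ v hv a
    have hcP := (hCmem c).1 hc
    rw [hSmem] at hv
    rw [hf_eq hcP, hf_eq hcP]
    have hres : restrictA (P.scope_sub c hcP) (Function.update θ v a)
        = restrictA (P.scope_sub c hcP) θ := by
      funext x
      show Function.update θ v a ⟨x.1, _⟩ = θ ⟨x.1, _⟩
      refine Function.update_of_ne ?_ _ _
      intro hx
      exact hv (by rw [← congrArg Subtype.val hx]; exact x.2)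
    rw [hres]
  set θ₀ : ↥P.vars → α := fun v => (P.dom_nonempty v.1 v.2).some with hθ₀def
  have hcov' : ∀ v : ↥P.vars, v ∈ (Finset.univ : Finset ↥P.vars) →
      1 ≤ ∑ c ∈ C, if v ∈ S c then γ c else 0 := by
    intro v _
    have h1 := hcover v.1 v.2
    calc (1:ℝ) ≤ ∑ c ∈ C, if v.1 ∈ c.scope then γ c else 0 := h1
      _ = ∑ c ∈ C, if v ∈ S c then γ c else 0 :=
        Finset.sum_congr rfl fun c _ => if_congr (hSmem c v).symm rfl rfl
  have key : (P.sol.ncard : ENNReal) ≤ ∏ c ∈ C, (c.rel.ncard : ENNReal) ^ γ c := by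
    calc (P.sol.ncard : ENNReal)
        ≤ marg D Finset.univ (fun τ => ∏ c ∈ C, f c τ ^ γ c) θ₀ := by
          rw [marg]
          have hsolsub : hfin.toFinset ⊆ Fintype.piFinset
              (fun v => if v ∈ (Finset.univ : Finset ↥P.vars) then D v else {θ₀ v}) := by
            intro p hp
            rw [Set.Finite.mem_toFinset] at hp
            rw [Fintype.mem_piFinset]
            intro v
            simp only [Finset.mem_univ, if_true, hDdef, Set.Finite.mem_toFinset]
            exact hp.1 v
          calc (P.sol.ncard : ENNReal) = ∑ _p ∈ hfin.toFinset, (1:ENNReal) := by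
                rw [Set.ncard_eq_toFinset_card _ hfin, Finset.sum_const, nsmul_eq_mul, mul_one]
            _ ≤ ∑ p ∈ hfin.toFinset, ∏ c ∈ C, f c p ^ γ c := by
                refine Finset.sum_le_sum fun p hp => ?_
                rw [Set.Finite.mem_toFinset] at hp
                refine le_of_eq (Finset.prod_eq_one fun c hc => ?_).symm
                have hcP := (hCmem c).1 hc
                rw [hf_eq hcP, if_pos (hp.2 c hcP), ENNReal.one_rpow]
            _ ≤ _ := Finset.sum_le_sum_of_subset hsolsub
      _ ≤ ∏ c ∈ C, (marg D (Finset.univ ∩ S c) (f c) θ₀) ^ γ c :=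
          finner D C S γ hγ0' f hdep Finset.univ hcov' θ₀
      _ ≤ ∏ c ∈ C, (c.rel.ncard : ENNReal) ^ γ c := by
          refine Finset.prod_le_prod' fun c hc => ?_
          refine ENNReal.rpow_le_rpow ?_ (hγ0' c hc)
          have hcP := (hCmem c).1 hc
          rw [Finset.univ_inter, marg]
          set T := Fintype.piFinset (fun v => if v ∈ S c then D v else {θ₀ v}) with hT
          have hmaps : ∀ p ∈ T.filter (fun p => restrictA (P.scope_sub c hcP) p ∈ c.rel),
              restrictA (P.scope_sub c hcP) p ∈ (hrel c hcP).toFinset := by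
            intro p hp
            rw [Set.Finite.mem_toFinset]
            exact (Finset.mem_filter.1 hp).2
          have hinj : Set.InjOn (fun p => restrictA (P.scope_sub c hcP) p)
              ((T.filter (fun p => restrictA (P.scope_sub c hcP) p ∈ c.rel)) :
                Set (↥P.vars → α)) := by
            intro p₁ hp₁ p₂ hp₂ heq
            have hm₁ := Fintype.mem_piFinset.1 (Finset.mem_filter.1 hp₁).1
            have hm₂ := Fintype.mem_piFinset.1 (Finset.mem_filter.1 hp₂).1
            funext v
            by_cases hv : v ∈ S c
            · have hvs : v.1 ∈ c.scope := (hSmem c v).1 hv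
              exact congrFun heq ⟨v.1, hvs⟩
            · have h1 := hm₁ v
              have h2 := hm₂ v
              rw [if_neg hv, Finset.mem_singleton] at h1 h2
              rw [h1, h2]
          calc ∑ p ∈ T, f c p
              = ∑ p ∈ T, if restrictA (P.scope_sub c hcP) p ∈ c.rel then 1 else 0 :=
                Finset.sum_congr rfl fun p _ => hf_eq hcP p
            _ = ((T.filter (fun p => restrictA (P.scope_sub c hcP) p ∈ c.rel)).card : ENNReal) :=
                Finset.sum_boole _ _
            _ ≤ ((hrel c hcP).toFinset.card : ENNReal) :=
                Nat.cast_le.2 (Finset.card_le_card_of_injOn _ hmaps hinj)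
            _ = (c.rel.ncard : ENNReal) := by rw [Set.ncard_eq_toFinset_card _ (hrel c hcP)]
  have hne : ∀ c ∈ C, (c.rel.ncard : ENNReal) ^ γ c ≠ ⊤ :=
    fun c hc => ENNReal.rpow_ne_top_of_nonneg (hγ0' c hc) (ENNReal.natCast_ne_top _)
  have hprodne : (∏ c ∈ C, (c.rel.ncard : ENNReal) ^ γ c) ≠ ⊤ :=
    (ENNReal.prod_lt_top fun c hc => lt_top_iff_ne_top.2 (hne c hc)).ne
  calc (P.sol.ncard : ℝ) = ((P.sol.ncard : ENNReal)).toReal := by simp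
    _ ≤ (∏ c ∈ C, (c.rel.ncard : ENNReal) ^ γ c).toReal := ENNReal.toReal_mono hprodne key
    _ = ∏ c ∈ C, ((c.rel.ncard : ENNReal) ^ γ c).toReal := ENNReal.toReal_prod _ _
    _ = ∏ c ∈ C, (c.rel.ncard : ℝ) ^ γ c := by
        refine Finset.prod_congr rfl fun c hc => ?_
        rw [← ENNReal.toReal_rpow]
        simp
end
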